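/- Let G be a finite simple graph on n ≥ 2 vertices with m edges and minimum vertex degree δ. Then EE(G) ≥ e^{2(m−δ)/(n−1)} + (n − 1) − 2(m−δ)/(n−1), with equality if and only if G has no edges (G is the empty graph on n vertices). -/

import Mathlib

/-!
The eigenvalues of the adjacency matrix sum to its trace, which is zero. Hence bounding
`e^{λᵢ} ≥ 1 + λᵢ` for every eigenvalue but the largest gives
`EE(G) ≥ e^{λ₁} + (n - 1) - λ₁`, with equality only when all eigenvalues vanish, i.e. when
`G` has no edges. The Rayleigh quotient of the indicator vector of all vertices but one of
minimum degree is `t = 2(m - δ)/(n - 1)`, so `0 ≤ t ≤ λ₁`, and `x ↦ e^x - x` is increasing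
on `[0, ∞)`.
-/

open Finset Real

namespace EstradaIndexPaper

/-- The adjacency matrix of a simple graph over `ℝ` is Hermitian. -/
theorem adjMatrix_isHermitian {n : ℕ} (G : SimpleGraph (Fin n)) [DecidableRel G.Adj] :
    (G.adjMatrix ℝ).IsHermitian := by
  unfold Matrix.IsHermitian
  rw [Matrix.conjTranspose_eq_transpose_of_trivial]
  exact G.isSymm_adjMatrix

/-- The eigenvalues of the adjacency matrix of `G`. -/
noncomputable def eig {n : ℕ} (G : SimpleGraph (Fin n)) [DecidableRel G.Adj] : Fin n → ℝ :=
  (adjMatrix_isHermitian G).eigenvalues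

/-- The Estrada index of `G`: the sum of `e^{λ_i}` over the adjacency eigenvalues. -/
noncomputable def EE {n : ℕ} (G : SimpleGraph (Fin n)) [DecidableRel G.Adj] : ℝ :=
  ∑ i, Real.exp (eig G i)

/-- The largest adjacency eigenvalue `λ₁` of `G`. -/
noncomputable def lam1 {n : ℕ} (G : SimpleGraph (Fin n)) [DecidableRel G.Adj] : ℝ :=
  ⨆ i, eig G i

/-- The Randić index `R(G) = Σ_{ij ∈ E(G)} (d(i)d(j))^{-1/2}`. -/
noncomputable def randic {n : ℕ} (G : SimpleGraph (Fin n)) [DecidableRel G.Adj] : ℝ :=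
  ∑ e ∈ G.edgeFinset,
    Sym2.lift ⟨fun i j => (Real.sqrt ((G.degree i : ℝ) * (G.degree j : ℝ)))⁻¹,
      fun i j => by simp [mul_comm]⟩ e

/-- The general Randić index `R_{1/2}(G) = Σ_{ij ∈ E(G)} (d(i)d(j))^{1/2}`. -/
noncomputable def randicHalf {n : ℕ} (G : SimpleGraph (Fin n)) [DecidableRel G.Adj] : ℝ :=
  ∑ e ∈ G.edgeFinset,
    Sym2.lift ⟨fun i j => Real.sqrt ((G.degree i : ℝ) * (G.degree j : ℝ)),
      fun i j => by simp [mul_comm]⟩ e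

end EstradaIndexPaper

open Matrix

theorem Matrix.IsHermitian.dotProduct_mulVec_le {n : Type*} [Fintype n] [DecidableEq n]
    {A : Matrix n n ℝ} (hA : A.IsHermitian) {μ : ℝ} (hμ : ∀ i, hA.eigenvalues i ≤ μ)
    (x : n → ℝ) : x ⬝ᵥ (A *ᵥ x) ≤ μ * (x ⬝ᵥ x) := by
  have hpsd : (μ • 1 - A).PosSemidef := by
    rw [posSemidef_iff_isHermitian_and_spectrum_nonneg]
    refine ⟨(isHermitian_one.smul (IsSelfAdjoint.all μ)).sub hA, ?_⟩
    rw [← Algebra.algebraMap_eq_smul_one, ← spectrum.singleton_sub_eq,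
      hA.spectrum_real_eq_range_eigenvalues]
    rintro _ ⟨_, rfl, _, ⟨i, rfl⟩, rfl⟩
    exact sub_nonneg.2 (hμ i)
  have := hpsd.dotProduct_mulVec_nonneg x
  simp only [star_trivial, sub_mulVec, smul_mulVec, one_mulVec, dotProduct_sub,
    dotProduct_smul, smul_eq_mul] at this
  linarith

theorem Matrix.one_sub_single_dotProduct_self {V R : Type*} [Fintype V] [DecidableEq V]
    [CommRing R] (v : V) :
    (1 - Pi.single v 1 : V → R) ⬝ᵥ (1 - Pi.single v 1) = Fintype.card V - 1 := by
  simp [dotProduct_sub, sub_dotProduct, one_dotProduct, dotProduct_single]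

theorem Real.exp_sub_self_monotoneOn : MonotoneOn (fun x => exp x - x) (Set.Ici 0) := by
  intro s hs t _ hst
  have hexp : exp t = exp s * exp (t - s) := by rw [← exp_add, add_sub_cancel]
  nlinarith [add_one_le_exp (t - s), one_le_exp (Set.mem_Ici.1 hs), exp_pos s]

theorem Real.sum_exp_eq_card_add_sum {ι : Type*} [Fintype ι] {f : ι → ℝ}
    (hf : ∑ i, f i = 0) :
    ∑ i, exp (f i) = Fintype.card ι + ∑ i, (exp (f i) - (f i + 1)) := by
  simp [Finset.sum_sub_distrib, Finset.sum_add_distrib, hf]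

theorem Real.exp_add_card_sub_le_sum_exp {ι : Type*} [Fintype ι] {f : ι → ℝ}
    (hf : ∑ i, f i = 0) (k : ι) :
    exp (f k) + (Fintype.card ι - 1) - f k ≤ ∑ i, exp (f i) := by
  have := Finset.single_le_sum (fun i _ => sub_nonneg.2 (add_one_le_exp (f i))) (mem_univ k)
  rw [sum_exp_eq_card_add_sum hf]
  linarith

theorem Real.sum_exp_eq_exp_add_card_sub_iff {ι : Type*} [Fintype ι] {f : ι → ℝ}
    (hf : ∑ i, f i = 0) (k : ι) :
    ∑ i, exp (f i) = exp (f k) + (Fintype.card ι - 1) - f k ↔ f = 0 := by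
  rw [sum_exp_eq_card_add_sum hf]
  constructor
  · intro h
    classical
    have hgap : ∀ i ∈ univ.erase k, exp (f i) - (f i + 1) = 0 := by
      rw [← sum_eq_zero_iff_of_nonneg fun i _ => sub_nonneg.2 (add_one_le_exp _)]
      linarith [add_sum_erase univ (fun i => exp (f i) - (f i + 1)) (mem_univ k)]
    have hoff : ∀ i, i ≠ k → f i = 0 := fun i hik => by
      by_contra hi
      linarith [add_one_lt_exp hi, hgap i (mem_erase.2 ⟨hik, mem_univ i⟩)]
    have hfk : f k = 0 := by
      rwa [sum_eq_single k (fun i _ => hoff i) (by simp)] at hf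
    funext i
    by_cases hik : i = k
    · rw [hik, hfk, Pi.zero_apply]
    · exact hoff i hik
  · rintro rfl
    simp

namespace SimpleGraph

theorem one_sub_single_dotProduct_adjMatrix_mulVec {V R : Type*} [Fintype V]
    [DecidableEq V] [CommRing R] (G : SimpleGraph V) [DecidableRel G.Adj] (v : V) :
    (1 - Pi.single v 1 : V → R) ⬝ᵥ (G.adjMatrix R *ᵥ (1 - Pi.single v 1)) =
      2 * #G.edgeFinset - 2 * G.degree v := by
  have hdeg : ∑ i, (G.degree i : R) = 2 * #G.edgeFinset := by
    exact_mod_cast congrArg (Nat.cast : ℕ → R) G.sum_degrees_eq_twice_card_edges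
  simp only [mulVec_sub, mulVec_single, MulOpposite.op_one, one_smul, dotProduct_sub,
    sub_dotProduct, one_dotProduct, adjMatrix_mulVec_apply, Pi.one_apply, sum_const,
    card_neighborFinset_eq_degree, nsmul_eq_mul, mul_one, hdeg, single_dotProduct, one_mul,
    col_apply, adjMatrix_apply, adj_comm, sum_boole, ← neighborFinset_eq_filter, G.irrefl,
    ↓reduceIte, mul_zero, sub_zero]
  ring

theorem adjMatrix_eq_zero_iff {V α : Type*} [MulZeroOneClass α] [Nontrivial α]
    (G : SimpleGraph V) [DecidableRel G.Adj] : G.adjMatrix α = 0 ↔ G = ⊥ := by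
  refine ⟨fun h => ?_, fun h => ?_⟩
  · ext i j
    simpa using congrFun₂ h i j
  · ext i j
    simp [h]

end SimpleGraph

namespace EstradaIndexPaper

variable {n : ℕ} (G : SimpleGraph (Fin n)) [DecidableRel G.Adj]

theorem sum_eig_eq_zero : ∑ i, eig G i = 0 := by
  simpa [eig, G.trace_adjMatrix ℝ] using (adjMatrix_isHermitian G).trace_eq_sum_eigenvalues.symm

theorem eig_eq_zero_iff : eig G = 0 ↔ G = ⊥ :=
  (adjMatrix_isHermitian G).eigenvalues_eq_zero_iff.trans G.adjMatrix_eq_zero_iff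

theorem eig_le_lam1 (i : Fin n) : eig G i ≤ lam1 G :=
  le_ciSup (Finite.bddAbove_range _) i

theorem exists_eig_eq_lam1 [NeZero n] : ∃ k, eig G k = lam1 G :=
  exists_eq_ciSup_of_finite

theorem exp_lam1_add_sub_le_EE [NeZero n] : exp (lam1 G) + ((n : ℝ) - 1) - lam1 G ≤ EE G := by
  obtain ⟨k, hk⟩ := exists_eig_eq_lam1 G
  simpa [hk, EE] using exp_add_card_sub_le_sum_exp (sum_eig_eq_zero G) k

theorem EE_eq_exp_lam1_add_sub_iff [NeZero n] :
    EE G = exp (lam1 G) + ((n : ℝ) - 1) - lam1 G ↔ G = ⊥ := by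
  obtain ⟨k, hk⟩ := exists_eig_eq_lam1 G
  simpa [hk, EE, eig_eq_zero_iff] using sum_exp_eq_exp_add_card_sub_iff (sum_eig_eq_zero G) k

theorem two_mul_card_edgeFinset_sub_degree_le (v : Fin n) :
    2 * ((#G.edgeFinset : ℝ) - G.degree v) ≤ lam1 G * ((n : ℝ) - 1) := by
  have := (adjMatrix_isHermitian G).dotProduct_mulVec_le (eig_le_lam1 G) (1 - Pi.single v 1)
  rwa [G.one_sub_single_dotProduct_adjMatrix_mulVec, one_sub_single_dotProduct_self,
    Fintype.card_fin, ← mul_sub] at this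

theorem stmt5 {n : ℕ} (hn : 2 ≤ n) (G : SimpleGraph (Fin n)) [DecidableRel G.Adj]
    (m δ : ℝ) (hm : m = G.edgeFinset.card) (hδ : δ = G.minDegree) :
    EE G ≥ Real.exp (2 * (m - δ) / ((n : ℝ) - 1)) + ((n : ℝ) - 1) -
      2 * (m - δ) / ((n : ℝ) - 1) ∧
    (EE G = Real.exp (2 * (m - δ) / ((n : ℝ) - 1)) + ((n : ℝ) - 1) -
      2 * (m - δ) / ((n : ℝ) - 1) ↔ G = ⊥) := by
  have : NeZero n := ⟨by omega⟩
  obtain ⟨v, hv⟩ := G.exists_minimal_degree_vertex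
  rw [hv] at hδ
  set t := 2 * (m - δ) / ((n : ℝ) - 1)
  have hn1 : (0 : ℝ) < n - 1 := by
    have : (2 : ℝ) ≤ n := by exact_mod_cast hn
    linarith
  have ht_le : t ≤ lam1 G := by
    rw [div_le_iff₀ hn1, hm, hδ]
    exact two_mul_card_edgeFinset_sub_degree_le G v
  have ht_nonneg : 0 ≤ t := by
    have : δ ≤ m := by rw [hm, hδ]; exact_mod_cast G.degree_le_card_edgeFinset v
    exact div_nonneg (by linarith) hn1.le
  have hmono := exp_sub_self_monotoneOn ht_nonneg (ht_nonneg.trans ht_le) ht_le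
  have hlow := exp_lam1_add_sub_le_EE G
  refine ⟨by linarith, fun heq => (EE_eq_exp_lam1_add_sub_iff G).1 (by linarith), fun hG => ?_⟩
  have hlam : lam1 G = 0 := by simp [lam1, (eig_eq_zero_iff G).2 hG]
  have ht : t = 0 := by linarith
  rw [(EE_eq_exp_lam1_add_sub_iff G).2 hG, hlam, ht]

end EstradaIndexPaper
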